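/- arXiv:2601.14792 — 4 statements merged into one kernel-verified Lean document; each statement's English description precedes it below -/
import Mathlib

section
/- The generalization error of the sparse (MoE) Bayes-optimal estimator is at most that of the dense Bayes-optimal estimator: ∑ᵢ pᵢ σ² βᵢ*ᵀ Σᵢ (Σᵢ + σ²I)⁻¹ βᵢ* ≤ ∑ᵢ pᵢ σ² βᵢ*ᵀ Σᵢ (pᵢΣᵢ + σ²I)⁻¹ βᵢ*. -/
open Matrix Finset

section aux

variable {n : ℕ}

lemma diag_form {S : Matrix (Fin n) (Fin n) ℝ} (hS : S.PosSemidef)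
    {c σ2 : ℝ} (hc : 0 < c) (hσ : 0 < σ2) :
    S * (c • S + σ2 • (1 : Matrix (Fin n) (Fin n) ℝ))⁻¹ =
      (hS.1.eigenvectorUnitary : Matrix (Fin n) (Fin n) ℝ) *
        diagonal (fun j => hS.1.eigenvalues j / (c * hS.1.eigenvalues j + σ2)) *
        star (hS.1.eigenvectorUnitary : Matrix (Fin n) (Fin n) ℝ) := by
  set U : Matrix (Fin n) (Fin n) ℝ := (hS.1.eigenvectorUnitary : Matrix (Fin n) (Fin n) ℝ) with hU
  set lam := hS.1.eigenvalues with hlam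
  have hUU : U * star U = 1 := Matrix.mem_unitaryGroup_iff.mp hS.1.eigenvectorUnitary.2
  have hUU' : star U * U = 1 := Matrix.mem_unitaryGroup_iff'.mp hS.1.eigenvectorUnitary.2
  have hSpec : S = U * diagonal (fun j => lam j) * star U := by
    simpa [U, lam, Function.comp] using hS.1.spectral_theorem
  have hpos : ∀ j, 0 < c * lam j + σ2 := fun j => by
    have := hS.eigenvalues_nonneg j
    positivity
  have hdiag : diagonal (fun j => c * lam j + σ2) =
      c • (diagonal fun j => lam j) + σ2 • (1 : Matrix (Fin n) (Fin n) ℝ) := by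
    ext a b
    by_cases h : a = b <;> simp [Matrix.diagonal_apply, h, Matrix.one_apply]
  have hshift : c • S + σ2 • (1 : Matrix (Fin n) (Fin n) ℝ) =
      U * diagonal (fun j => c * lam j + σ2) * star U := by
    rw [hdiag, hSpec]
    simp only [Matrix.mul_add, Matrix.add_mul, Matrix.mul_smul, Matrix.smul_mul,
      Matrix.mul_one, Matrix.one_mul, Matrix.mul_assoc]
    rw [hUU]
  have hinv : (c • S + σ2 • (1 : Matrix (Fin n) (Fin n) ℝ))⁻¹ =
      U * diagonal (fun j => (c * lam j + σ2)⁻¹) * star U := by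
    apply Matrix.inv_eq_right_inv
    rw [hshift]
    calc U * diagonal (fun j => c * lam j + σ2) * star U *
          (U * diagonal (fun j => (c * lam j + σ2)⁻¹) * star U)
        = U * (diagonal (fun j => c * lam j + σ2) * (star U * U) *
            diagonal (fun j => (c * lam j + σ2)⁻¹)) * star U := by
          simp only [Matrix.mul_assoc]
      _ = 1 := by
          rw [hUU', Matrix.mul_one, diagonal_mul_diagonal]
          have h2 : (fun j => (c * lam j + σ2) * (c * lam j + σ2)⁻¹) = fun _ => (1 : ℝ) := by
            funext j; exact mul_inv_cancel₀ (hpos j).ne'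
          rw [h2, diagonal_one, Matrix.mul_one, hUU]
  rw [hinv]
  conv_lhs => rw [hSpec]
  calc U * diagonal (fun j => lam j) * star U *
        (U * diagonal (fun j => (c * lam j + σ2)⁻¹) * star U)
      = U * (diagonal (fun j => lam j) * (star U * U) *
          diagonal (fun j => (c * lam j + σ2)⁻¹)) * star U := by
        simp only [Matrix.mul_assoc]
    _ = U * diagonal (fun j => lam j / (c * lam j + σ2)) * star U := by
        rw [hUU', Matrix.mul_one, diagonal_mul_diagonal]
        simp [div_eq_mul_inv]

lemma quad_form (U : Matrix (Fin n) (Fin n) ℝ) (f : Fin n → ℝ) (β : Fin n → ℝ) :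
    β ⬝ᵥ (U * diagonal f * star U).mulVec β =
      ∑ j, f j * ((star U).mulVec β j) ^ 2 := by
  rw [← Matrix.mulVec_mulVec, ← Matrix.mulVec_mulVec, Matrix.dotProduct_mulVec]
  have hvec : Matrix.vecMul β U = (star U).mulVec β := by
    rw [Matrix.star_eq_conjTranspose, Matrix.conjTranspose_eq_transpose_of_trivial,
      Matrix.mulVec_transpose]
  rw [hvec]
  simp [Matrix.mulVec_diagonal, dotProduct, mul_comm, mul_assoc, sq, mul_left_comm]

lemma key {S : Matrix (Fin n) (Fin n) ℝ} (hS : S.PosSemidef) (β : Fin n → ℝ)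
    {p σ2 : ℝ} (hp0 : 0 < p) (hp1 : p ≤ 1) (hσ : 0 < σ2) :
    β ⬝ᵥ (S * (S + σ2 • (1 : Matrix (Fin n) (Fin n) ℝ))⁻¹).mulVec β ≤
      β ⬝ᵥ (S * (p • S + σ2 • (1 : Matrix (Fin n) (Fin n) ℝ))⁻¹).mulVec β := by
  have h1 : S + σ2 • (1 : Matrix (Fin n) (Fin n) ℝ) =
      (1 : ℝ) • S + σ2 • (1 : Matrix (Fin n) (Fin n) ℝ) := by rw [one_smul]
  rw [h1, diag_form hS one_pos hσ, diag_form hS hp0 hσ, quad_form, quad_form]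
  apply Finset.sum_le_sum
  intro j _
  have hl := hS.eigenvalues_nonneg j
  have hd1 : 0 < p * hS.1.eigenvalues j + σ2 := by positivity
  have hd2 : p * hS.1.eigenvalues j + σ2 ≤ 1 * hS.1.eigenvalues j + σ2 := by nlinarith
  have : hS.1.eigenvalues j / (1 * hS.1.eigenvalues j + σ2) ≤
      hS.1.eigenvalues j / (p * hS.1.eigenvalues j + σ2) := by
    gcongr
  have hsq : (0:ℝ) ≤ ((star (hS.1.eigenvectorUnitary : Matrix (Fin n) (Fin n) ℝ)).mulVec β j) ^ 2 :=
    sq_nonneg _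
  nlinarith [mul_le_mul_of_nonneg_right this hsq]

end aux

/-- The generalization error of the sparse (MoE) Bayes-optimal estimator is at most
that of the dense Bayes-optimal estimator:
`∑ᵢ pᵢ σ² βᵢ*ᵀ Σᵢ (Σᵢ + σ²I)⁻¹ βᵢ* ≤ ∑ᵢ pᵢ σ² βᵢ*ᵀ Σᵢ (pᵢΣᵢ + σ²I)⁻¹ βᵢ*`. -/
theorem sparse_risk_le_dense_risk {k : ℕ} (d : Fin k → ℕ)
    (S : (i : Fin k) → Matrix (Fin (d i)) (Fin (d i)) ℝ)
    (hS : ∀ i, (S i).PosSemidef)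
    (β : (i : Fin k) → (Fin (d i) → ℝ))
    (p : Fin k → ℝ) (hp0 : ∀ i, 0 < p i) (hp1 : ∀ i, p i ≤ 1)
    (hpsum : ∑ i, p i = 1) (σ2 : ℝ) (hσ : 0 < σ2) :
    ∑ i, p i * σ2 *
        (β i ⬝ᵥ (S i * (S i + σ2 • (1 : Matrix (Fin (d i)) (Fin (d i)) ℝ))⁻¹).mulVec (β i))
      ≤ ∑ i, p i * σ2 *
        (β i ⬝ᵥ (S i * (p i • S i + σ2 • (1 : Matrix (Fin (d i)) (Fin (d i)) ℝ))⁻¹).mulVec (β i)) := by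
  apply Finset.sum_le_sum
  intro i _
  have h := key (hS i) (β i) (hp0 i) (hp1 i) hσ
  have hc : 0 ≤ p i * σ2 := mul_nonneg (hp0 i).le hσ.le
  exact mul_le_mul_of_nonneg_left h hc
end

section
/- Under Gaussian input perturbations of variance σₒ², the risk of the dense Bayes estimator equals ∑ᵢ pᵢσ² βᵢ*ᵀΣᵢ(pᵢΣᵢ + σ²I)⁻¹βᵢ* + ∑ᵢ pᵢ²(σₒ² − σ²) βᵢ*ᵀΣᵢ(pᵢΣᵢ + σ²I)⁻²Σᵢβᵢ*, i.e., R(β̂; σₒ²) where β̂ᵢ = pᵢ(pᵢΣᵢ+σ²I)⁻¹Σᵢβᵢ* and R(β̂; σₒ²) = ∑ᵢ pᵢ(βᵢ*ᵀΣᵢβᵢ* + β̂ᵢᵀΣᵢβ̂ᵢ − 2β̂ᵢᵀΣᵢβᵢ*) + σₒ² β̂ᵀβ̂. -/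
/-!
Put `A = pS + σ²I` and `r = A⁻¹β`. Then `β = pSr + σ²r` and, since `S` commutes with `A⁻¹`, the
Bayes estimator is `b = pSr`, so the residual is `β - b = σ²r`. Both sides of the identity
become the same quadratic expression in `r`, namely `pσ⁴ rᵀSr + p²σₒ² ‖Sr‖²`.
-/

open Matrix Finset

variable {n R : Type*}

theorem Matrix.PosSemidef.posDef_smul_add_smul_one [DecidableEq n] {S : Matrix n n ℝ}
    (hS : S.PosSemidef) {p c : ℝ} (hp : 0 ≤ p) (hc : 0 < c) :
    (p • S + c • (1 : Matrix n n ℝ)).PosDef :=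
  PosDef.posSemidef_add (hS.smul hp) (PosDef.one.smul hc)

variable [Fintype n]

theorem Matrix.IsSymm.dotProduct_mulVec_comm [CommSemiring R] {S : Matrix n n R} (hS : S.IsSymm)
    (v w : n → R) : v ⬝ᵥ S *ᵥ w = w ⬝ᵥ S *ᵥ v := by
  simpa only [hS.eq] using dotProduct_transpose_mulVec S v w

theorem risk_eq_of_eq_smul_mulVec_add_smul [CommRing R] {S : Matrix n n R} (hS : S.IsSymm)
    {p c c' : R} {r β b : n → R} (hβ : β = p • (S *ᵥ r) + c • r) (hb : b = p • (S *ᵥ r)) :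
    p * (β ⬝ᵥ S *ᵥ β + b ⬝ᵥ S *ᵥ b - 2 * (b ⬝ᵥ S *ᵥ β)) + c' * (b ⬝ᵥ b)
      = p * c * (β ⬝ᵥ S *ᵥ r) + p ^ 2 * (c' - c) * (S *ᵥ r ⬝ᵥ S *ᵥ r) := by
  have hr : r ⬝ᵥ S *ᵥ (S *ᵥ r) = S *ᵥ r ⬝ᵥ S *ᵥ r := hS.dotProduct_mulVec_comm _ _
  subst hβ hb
  simp only [mulVec_add, mulVec_smul, dotProduct_add, add_dotProduct, dotProduct_smul,
    smul_dotProduct, smul_eq_mul, hr]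
  ring

theorem dense_block_risk_eq [DecidableEq n] {S A : Matrix n n ℝ} (hS : S.PosSemidef) {p σ2 : ℝ}
    (hp : 0 ≤ p) (hσ : 0 < σ2) (hA : A = p • S + σ2 • (1 : Matrix n n ℝ)) (σo2 : ℝ)
    {β b : n → ℝ} (hb : b = p • ((A⁻¹ * S) *ᵥ β)) :
    p * (β ⬝ᵥ S *ᵥ β + b ⬝ᵥ S *ᵥ b - 2 * (b ⬝ᵥ S *ᵥ β)) + σo2 * (b ⬝ᵥ b)
      = p * σ2 * (β ⬝ᵥ (S * A⁻¹) *ᵥ β)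
        + p ^ 2 * (σo2 - σ2) * (β ⬝ᵥ (S * A⁻¹ ^ 2 * S) *ᵥ β) := by
  have hSsymm : S.IsSymm := isHermitian_iff_isSymm.mp hS.isHermitian
  have hAsymm : A.IsSymm := hA ▸ (hSsymm.smul p).add (isSymm_one.smul σ2)
  have hAdet : IsUnit A.det :=
    (isUnit_iff_isUnit_det A).mp (hA ▸ hS.posDef_smul_add_smul_one hp hσ).isUnit
  have hcomm : Commute S A⁻¹ := by
    have hSA : Commute S A :=
      hA ▸ ((Commute.refl S).smul_right p).add_right ((Commute.one_right S).smul_right σ2)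
    simpa only [Matrix.zpow_neg_one] using Matrix.Commute.zpow_right hSA (-1)
  have hM : (S * A⁻¹).IsSymm := by
    rw [IsSymm, transpose_mul, transpose_nonsing_inv, hAsymm.eq, hSsymm.eq, hcomm.eq]
  set r := A⁻¹ *ᵥ β
  have hβ : β = p • (S *ᵥ r) + σ2 • r :=
    calc β = A *ᵥ r := by rw [mulVec_mulVec, mul_nonsing_inv A hAdet, one_mulVec]
      _ = p • (S *ᵥ r) + σ2 • r := by rw [hA, add_mulVec, smul_mulVec, smul_mulVec, one_mulVec]
  have hbr : b = p • (S *ᵥ r) := by rw [hb, ← hcomm.eq, ← mulVec_mulVec]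
  have hsq : β ⬝ᵥ (S * A⁻¹ ^ 2 * S) *ᵥ β = S *ᵥ r ⬝ᵥ S *ᵥ r := by
    rw [sq, mul_assoc, mul_assoc, ← hcomm.eq, ← mul_assoc, ← mulVec_mulVec,
      hM.dotProduct_mulVec_comm, mulVec_mulVec]
  rw [risk_eq_of_eq_smul_mulVec_add_smul hSsymm hβ hbr, hsq, ← mulVec_mulVec]

theorem dense_robustness_risk_general {k : ℕ} (d : Fin k → ℕ)
    (S : (i : Fin k) → Matrix (Fin (d i)) (Fin (d i)) ℝ)
    (hS : ∀ i, (S i).PosSemidef)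
    (β : (i : Fin k) → (Fin (d i) → ℝ))
    (p : Fin k → ℝ) (hp0 : ∀ i, 0 < p i)
    (σ2 σo2 : ℝ) (hσ : 0 < σ2)
    (bopt : (i : Fin k) → (Fin (d i) → ℝ))
    (hbopt : ∀ i, bopt i =
        p i • ((p i • S i + σ2 • (1 : Matrix (Fin (d i)) (Fin (d i)) ℝ))⁻¹ * S i).mulVec (β i)) :
    (∑ i, p i * (β i ⬝ᵥ (S i).mulVec (β i)
        + bopt i ⬝ᵥ (S i).mulVec (bopt i) - 2 * (bopt i ⬝ᵥ (S i).mulVec (β i))))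
      + σo2 * ∑ i, bopt i ⬝ᵥ bopt i
    = (∑ i, p i * σ2 *
          (β i ⬝ᵥ (S i * (p i • S i + σ2 • (1 : Matrix (Fin (d i)) (Fin (d i)) ℝ))⁻¹).mulVec (β i)))
      + ∑ i, (p i) ^ 2 * (σo2 - σ2) *
          (β i ⬝ᵥ (S i * ((p i • S i + σ2 • (1 : Matrix (Fin (d i)) (Fin (d i)) ℝ))⁻¹) ^ 2
            * S i).mulVec (β i)) := by
  rw [mul_sum, ← sum_add_distrib, ← sum_add_distrib]
  exact sum_congr rfl fun i _ => dense_block_risk_eq (hS i) (hp0 i).le hσ rfl σo2 (hbopt i)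

/-- Under Gaussian input perturbations of variance `σₒ²`, the risk of the dense Bayes
estimator (whose blocks are `β̂ᵢ = pᵢ(pᵢΣᵢ+σ²I)⁻¹Σᵢβᵢ*`) equals
`∑ᵢ pᵢσ² βᵢ*ᵀΣᵢ(pᵢΣᵢ + σ²I)⁻¹βᵢ* + ∑ᵢ pᵢ²(σₒ² − σ²) βᵢ*ᵀΣᵢ(pᵢΣᵢ + σ²I)⁻²Σᵢβᵢ*`, where
`R(β̂; σₒ²) = ∑ᵢ pᵢ(βᵢ*ᵀΣᵢβᵢ* + β̂ᵢᵀΣᵢβ̂ᵢ − 2β̂ᵢᵀΣᵢβᵢ*) + σₒ² β̂ᵀβ̂`. -/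
theorem dense_robustness_risk {k : ℕ} (d : Fin k → ℕ)
    (S : (i : Fin k) → Matrix (Fin (d i)) (Fin (d i)) ℝ)
    (hS : ∀ i, (S i).PosSemidef)
    (β : (i : Fin k) → (Fin (d i) → ℝ))
    (p : Fin k → ℝ) (hp0 : ∀ i, 0 < p i) (hp1 : ∀ i, p i ≤ 1)
    (σ2 σo2 : ℝ) (hσ : 0 < σ2) (hσo : 0 < σo2)
    (bopt : (i : Fin k) → (Fin (d i) → ℝ))
    (hbopt : ∀ i, bopt i =
        p i • ((p i • S i + σ2 • (1 : Matrix (Fin (d i)) (Fin (d i)) ℝ))⁻¹ * S i).mulVec (β i)) :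
    (∑ i, p i * (β i ⬝ᵥ (S i).mulVec (β i)
        + bopt i ⬝ᵥ (S i).mulVec (bopt i) - 2 * (bopt i ⬝ᵥ (S i).mulVec (β i))))
      + σo2 * ∑ i, bopt i ⬝ᵥ bopt i
    = (∑ i, p i * σ2 *
          (β i ⬝ᵥ (S i * (p i • S i + σ2 • (1 : Matrix (Fin (d i)) (Fin (d i)) ℝ))⁻¹).mulVec (β i)))
      + ∑ i, (p i) ^ 2 * (σo2 - σ2) *
          (β i ⬝ᵥ (S i * ((p i • S i + σ2 • (1 : Matrix (Fin (d i)) (Fin (d i)) ℝ))⁻¹) ^ 2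
            * S i).mulVec (β i)) :=
  dense_robustness_risk_general d S hS β p hp0 σ2 σo2 hσ bopt hbopt
end

section
/- Under Gaussian input perturbations of variance σₒ², the risk of the sparse Bayes estimators equals ∑ᵢ pᵢσ² βᵢ*ᵀΣᵢ(Σᵢ + σ²I)⁻¹βᵢ* + ∑ᵢ pᵢ(σₒ² − σ²) βᵢ*ᵀΣᵢ(Σᵢ + σ²I)⁻²Σᵢβᵢ*, where expert i uses β̂ᵢ = (Σᵢ + σ²I)⁻¹Σᵢβᵢ* and its risk contribution is pᵢ(βᵢ*ᵀΣᵢβᵢ* + β̂ᵢᵀΣᵢβ̂ᵢ − 2β̂ᵢᵀΣᵢβᵢ* + σₒ² β̂ᵢᵀβ̂ᵢ). -/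
/-!
The risk splits over the experts. For one expert put `B = (Σ + σ²I)⁻¹`; from
`B(Σ + σ²I) = (Σ + σ²I)B = I`, both `BΣ` and `ΣB` equal `D := I - σ²B`, and `D` is symmetric.
Hence `β̂ = Dβ`, every term of the risk is a quadratic form `βᵀMβ`, and the claim reduces
to the matrix identity `Σ + DΣD - 2DΣ + σₒ²D² = σ²D + (σₒ² - σ²)D²`, which follows
from `DΣ = ΣD = Σ - σ²D`.
-/

open Matrix Finset

namespace Matrix

variable {n R : Type*} [Fintype n] [CommRing R]

theorem mulVec_dotProduct_mulVec (M N : Matrix n n R) (x y : n → R) :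
    M *ᵥ x ⬝ᵥ N *ᵥ y = x ⬝ᵥ (Mᵀ * N) *ᵥ y := by
  rw [← mulVec_mulVec, dotProduct_mulVec x Mᵀ, vecMul_transpose]

variable [DecidableEq n] {S : Matrix n n R} {c : R}

theorem inv_add_smul_one_mul_self (h : IsUnit (S + c • 1).det) :
    (S + c • 1)⁻¹ * S = 1 - c • (S + c • 1)⁻¹ := by
  rw [eq_sub_iff_add_eq]
  calc _ = (S + c • 1)⁻¹ * (S + c • 1) := by rw [mul_add, mul_smul_comm, mul_one]
    _ = 1 := nonsing_inv_mul _ h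

theorem self_mul_inv_add_smul_one (h : IsUnit (S + c • 1).det) :
    S * (S + c • 1)⁻¹ = 1 - c • (S + c • 1)⁻¹ := by
  rw [eq_sub_iff_add_eq]
  calc _ = (S + c • 1) * (S + c • 1)⁻¹ := by rw [add_mul, smul_mul_assoc, one_mul]
    _ = 1 := mul_nonsing_inv _ h

theorem IsSymm.inv_add_smul_one (hS : S.IsSymm) (c : R) : ((S + c • 1)⁻¹).IsSymm := by
  rw [IsSymm, transpose_nonsing_inv, transpose_add, transpose_smul, transpose_one, hS.eq]

theorem PosSemidef.isUnit_det_add_smul_one {K : Type*} [Field K] [PartialOrder K] [StarRing K]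
    [StarOrderedRing K] {S : Matrix n n K} (hS : S.PosSemidef) {c : K} (hc : 0 < c) :
    IsUnit (S + c • 1).det :=
  (isUnit_iff_isUnit_det _).1 (PosDef.posSemidef_add hS (PosDef.one.smul hc)).isUnit

end Matrix

section Ridge

variable {n R : Type*} [Fintype n] [DecidableEq n] [CommRing R] {S : Matrix n n R} {c : R}

theorem ridge_risk_eq (hS : S.IsSymm) (h : IsUnit (S + c • 1).det) (β : n → R) (s : R) :
    β ⬝ᵥ S *ᵥ β + ((S + c • 1)⁻¹ * S) *ᵥ β ⬝ᵥ S *ᵥ (((S + c • 1)⁻¹ * S) *ᵥ β)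
        - 2 * (((S + c • 1)⁻¹ * S) *ᵥ β ⬝ᵥ S *ᵥ β)
        + s * (((S + c • 1)⁻¹ * S) *ᵥ β ⬝ᵥ ((S + c • 1)⁻¹ * S) *ᵥ β)
      = c * (β ⬝ᵥ (S * (S + c • 1)⁻¹) *ᵥ β)
        + (s - c) * (β ⬝ᵥ (S * (S + c • 1)⁻¹ ^ 2 * S) *ᵥ β) := by
  set B := (S + c • 1)⁻¹
  set D : Matrix n n R := 1 - c • B with hD
  have hBS : B * S = D := inv_add_smul_one_mul_self h
  have hSB : S * B = D := self_mul_inv_add_smul_one h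
  have hDsymm : Dᵀ = D := by
    rw [hD, transpose_sub, transpose_one, transpose_smul, (hS.inv_add_smul_one c).eq]
  have hDS : D * S = S - c • D := by rw [hD, sub_mul, one_mul, smul_mul_assoc, hBS]
  have hSD : S * D = S - c • D := by rw [hD, mul_sub, mul_one, mul_smul_comm, hSB]
  have hSBBS : S * B ^ 2 * S = D * D := by rw [sq, ← mul_assoc, hSB, mul_assoc, hBS]
  have key : S + D * S * D - (2 : R) • (D * S) + s • (D * D) = c • D + (s - c) • (D * D) := by
    rw [hDS, sub_mul, hSD, smul_mul_assoc]
    module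
  rw [hBS, hSB, hSBBS]
  simp only [mulVec_dotProduct_mulVec, hDsymm, mulVec_mulVec, ← mul_assoc]
  have key_quad := congrArg (fun M ↦ β ⬝ᵥ M *ᵥ β) key
  simp only [add_mulVec, sub_mulVec, smul_mulVec, dotProduct_add, dotProduct_sub,
    dotProduct_smul, smul_eq_mul] at key_quad
  linear_combination key_quad

end Ridge

theorem sparse_robustness_risk_general {k : ℕ} (d : Fin k → ℕ)
    (S : (i : Fin k) → Matrix (Fin (d i)) (Fin (d i)) ℝ)
    (hS : ∀ i, (S i).PosSemidef)
    (β : (i : Fin k) → (Fin (d i) → ℝ))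
    (p : Fin k → ℝ)
    (σ2 σo2 : ℝ) (hσ : 0 < σ2)
    (bopt : (i : Fin k) → (Fin (d i) → ℝ))
    (hbopt : ∀ i, bopt i =
        ((S i + σ2 • (1 : Matrix (Fin (d i)) (Fin (d i)) ℝ))⁻¹ * S i).mulVec (β i)) :
    ∑ i, p i * (β i ⬝ᵥ (S i).mulVec (β i)
        + bopt i ⬝ᵥ (S i).mulVec (bopt i) - 2 * (bopt i ⬝ᵥ (S i).mulVec (β i))
        + σo2 * (bopt i ⬝ᵥ bopt i))
    = (∑ i, p i * σ2 *
          (β i ⬝ᵥ (S i * (S i + σ2 • (1 : Matrix (Fin (d i)) (Fin (d i)) ℝ))⁻¹).mulVec (β i)))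
      + ∑ i, p i * (σo2 - σ2) *
          (β i ⬝ᵥ (S i * ((S i + σ2 • (1 : Matrix (Fin (d i)) (Fin (d i)) ℝ))⁻¹) ^ 2
            * S i).mulVec (β i)) := by
  rw [← sum_add_distrib]
  refine sum_congr rfl fun i _ ↦ ?_
  have hSsymm : (S i).IsSymm := isHermitian_iff_isSymm.mp (hS i).isHermitian
  rw [hbopt i, ridge_risk_eq hSsymm ((hS i).isUnit_det_add_smul_one hσ) (β i) σo2]
  ring

/-- Under Gaussian input perturbations of variance `σₒ²`, the risk of the sparse Bayes
estimators (expert `i` uses `β̂ᵢ = (Σᵢ + σ²I)⁻¹Σᵢβᵢ*`, with risk contribution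
`pᵢ(βᵢ*ᵀΣᵢβᵢ* + β̂ᵢᵀΣᵢβ̂ᵢ − 2β̂ᵢᵀΣᵢβᵢ* + σₒ² β̂ᵢᵀβ̂ᵢ)`) equals
`∑ᵢ pᵢσ² βᵢ*ᵀΣᵢ(Σᵢ + σ²I)⁻¹βᵢ* + ∑ᵢ pᵢ(σₒ² − σ²) βᵢ*ᵀΣᵢ(Σᵢ + σ²I)⁻²Σᵢβᵢ*`. -/
theorem sparse_robustness_risk {k : ℕ} (d : Fin k → ℕ)
    (S : (i : Fin k) → Matrix (Fin (d i)) (Fin (d i)) ℝ)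
    (hS : ∀ i, (S i).PosSemidef)
    (β : (i : Fin k) → (Fin (d i) → ℝ))
    (p : Fin k → ℝ) (hp0 : ∀ i, 0 < p i) (hp1 : ∀ i, p i ≤ 1)
    (σ2 σo2 : ℝ) (hσ : 0 < σ2) (hσo : 0 < σo2)
    (bopt : (i : Fin k) → (Fin (d i) → ℝ))
    (hbopt : ∀ i, bopt i =
        ((S i + σ2 • (1 : Matrix (Fin (d i)) (Fin (d i)) ℝ))⁻¹ * S i).mulVec (β i)) :
    ∑ i, p i * (β i ⬝ᵥ (S i).mulVec (β i)
        + bopt i ⬝ᵥ (S i).mulVec (bopt i) - 2 * (bopt i ⬝ᵥ (S i).mulVec (β i))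
        + σo2 * (bopt i ⬝ᵥ bopt i))
    = (∑ i, p i * σ2 *
          (β i ⬝ᵥ (S i * (S i + σ2 • (1 : Matrix (Fin (d i)) (Fin (d i)) ℝ))⁻¹).mulVec (β i)))
      + ∑ i, p i * (σo2 - σ2) *
          (β i ⬝ᵥ (S i * ((S i + σ2 • (1 : Matrix (Fin (d i)) (Fin (d i)) ℝ))⁻¹) ^ 2
            * S i).mulVec (β i)) :=
  sparse_robustness_risk_general d S hS β p σ2 σo2 hσ bopt hbopt
end

section
/- For each individual expert i, the convergence rate factor ρ_{Sparse,i} = 1 − [λ_{i1}² (σ²+λ_{i,n/k}²)(cσ²+λ_{i,n/k}²)] / [λ_{i,n/k}² (σ²+λ_{i1}²)(cσ²+λ_{i1}²)] satisfies ρ_{Sparse,i} ≤ ρ_Dense, where ρ_Dense = 1 − [max_j λ_{j1}² (σ²+min_l λ_{l,n/k}²)(cσ²+min_l λ_{l,n/k}²)] / [min_l λ_{l,n/k}² (σ²+max_j λ_{j1}²)(cσ²+max_j λ_{j1}²)]. -/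
open Finset

/-- Key monotonicity: `x ↦ x/((σ²+x)(cσ²+x))` is antitone for `x > √c σ²`. -/
lemma aux_f_anti (c σ2 x y : ℝ) (hc : 1 < c) (hσ : 0 < σ2)
    (hx : Real.sqrt c * σ2 < x) (hxy : x ≤ y) :
    y * (σ2 + x) * (c * σ2 + x) ≤ x * (σ2 + y) * (c * σ2 + y) := by
  have hc0 : (0:ℝ) ≤ c := by linarith
  have hs : Real.sqrt c ^ 2 = c := Real.sq_sqrt hc0
  have hs1 : 1 ≤ Real.sqrt c := by
    nlinarith [Real.sqrt_nonneg c]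
  have hx0 : 0 < x := lt_trans (by nlinarith) hx
  have hs0 : 0 < Real.sqrt c * σ2 := by nlinarith
  have hkey : c * σ2 ^ 2 ≤ x * y := by
    have h := mul_le_mul hx.le (hx.le.trans hxy) hs0.le hx0.le
    nlinarith
  nlinarith [mul_nonneg (sub_nonneg.2 hxy) (sub_nonneg.2 hkey)]

/-- For each expert `i`, with `a i = λ_{i1}²` the largest and `b i = λ_{i,n/k}²` the
smallest limiting squared singular values of block `Xᵢ`, the sparse convergence factor
`ρ_{Sparse,i} = 1 − [a i (σ²+b i)(cσ²+b i)]/[b i (σ²+a i)(cσ²+a i)]` is at most the dense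
factor `ρ_Dense = 1 − [max_j a j (σ²+min_l b l)(cσ²+min_l b l)]/[min_l b l (σ²+max_j a j)(cσ²+max_j a j)]`. -/
theorem sparse_rate_le_dense_rate {k : ℕ} [NeZero k] (c σ2 : ℝ) (hc : 1 < c) (hσ : 0 < σ2)
    (a b : Fin k → ℝ)
    (hab : ∀ i, b i ≤ a i)
    (hb : ∀ i, Real.sqrt c * σ2 < b i) :
    ∀ i : Fin k,
      1 - a i * (σ2 + b i) * (c * σ2 + b i) / (b i * (σ2 + a i) * (c * σ2 + a i))
        ≤ 1 - (Finset.univ.sup' Finset.univ_nonempty a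
              * (σ2 + Finset.univ.inf' Finset.univ_nonempty b)
              * (c * σ2 + Finset.univ.inf' Finset.univ_nonempty b))
            / (Finset.univ.inf' Finset.univ_nonempty b
              * (σ2 + Finset.univ.sup' Finset.univ_nonempty a)
              * (c * σ2 + Finset.univ.sup' Finset.univ_nonempty a)) := by
  intro i
  set A := Finset.univ.sup' Finset.univ_nonempty a with hA
  set B := Finset.univ.inf' Finset.univ_nonempty b with hB
  have hc0 : (0:ℝ) ≤ c := by linarith
  have hsσ : 0 < Real.sqrt c * σ2 := by
    have : (1:ℝ) ≤ Real.sqrt c := by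
      nlinarith [Real.sq_sqrt hc0, Real.sqrt_nonneg c]
    nlinarith
  have hBgt : Real.sqrt c * σ2 < B := by
    rw [hB, Finset.lt_inf'_iff]
    exact fun j _ => hb j
  have hBle : B ≤ b i := Finset.inf'_le _ (Finset.mem_univ i)
  have haA : a i ≤ A := Finset.le_sup' _ (Finset.mem_univ i)
  have hbi : Real.sqrt c * σ2 < b i := hb i
  have hB0 : 0 < B := lt_trans hsσ hBgt
  have hb0 : 0 < b i := lt_trans hsσ hbi
  have ha0 : 0 < a i := lt_of_lt_of_le hb0 (hab i)
  have hA0 : 0 < A := lt_of_lt_of_le ha0 haA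
  -- two applications of the key lemma
  have h1 : A * (σ2 + a i) * (c * σ2 + a i) ≤ a i * (σ2 + A) * (c * σ2 + A) :=
    aux_f_anti c σ2 (a i) A hc hσ (lt_of_lt_of_le hbi (hab i)) haA
  have h2 : b i * (σ2 + B) * (c * σ2 + B) ≤ B * (σ2 + b i) * (c * σ2 + b i) :=
    aux_f_anti c σ2 B (b i) hc hσ hBgt hBle
  have hd1 : 0 < b i * (σ2 + a i) * (c * σ2 + a i) := by positivity
  have hd2 : 0 < B * (σ2 + A) * (c * σ2 + A) := by positivity
  have key : A * (σ2 + B) * (c * σ2 + B) / (B * (σ2 + A) * (c * σ2 + A))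
      ≤ a i * (σ2 + b i) * (c * σ2 + b i) / (b i * (σ2 + a i) * (c * σ2 + a i)) := by
    rw [div_le_div_iff₀ hd2 hd1]
    have e1 : 0 ≤ A * (σ2 + a i) * (c * σ2 + a i) := by positivity
    have e2 : 0 ≤ b i * (σ2 + B) * (c * σ2 + B) := by positivity
    nlinarith [mul_le_mul h2 h1 e1 (le_of_lt (by positivity : (0:ℝ) < B * (σ2 + b i) * (c * σ2 + b i)))]
  linarith
end
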